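/- (Theorem: subsystem code distance for lattice-surgery merging.) In the merging subsystem code setting, the dressed distance is at least min(d_A, d_B): every pair (v_X, v_Z) ∈ F₂^M × F₂^M satisfying ⟨v_X, z⟩ = 0 for all z ∈ S_Z and ⟨v_Z, x⟩ = 0 for all x ∈ S_X, and such that not both v_X ∈ 𝒢_X and v_Z ∈ 𝒢_Z, has weight #{q ∈ M : v_X(q) ≠ 0 or v_Z(q) ≠ 0} ≥ min(d_A, d_B). -/

import Mathlib

/-- Hamming weight of a vector over `ZMod 2`. -/
def wt {ι : Type} [Fintype ι] (v : ι → ZMod 2) : ℕ :=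
  (Finset.univ.filter fun i => v i ≠ 0).card

/-- The standard bilinear form `⟨u, v⟩ = Σ_q u_q v_q` over `ZMod 2`. -/
def bform {ι : Type} [Fintype ι] (u v : ι → ZMod 2) : ZMod 2 := ∑ i, u i * v i

/-- The `F₂`-row space of a matrix. -/
def rowSpan {m n : Type} [Fintype m] [Fintype n] (H : Matrix m n (ZMod 2)) :
    Submodule (ZMod 2) (n → ZMod 2) :=
  Submodule.span (ZMod 2) (Set.range fun i => fun j => H i j)

/-- The qubit set `M = A ⊔ C ⊔ T` of the merged patch, where `C = VV ⊔ CC` is the qubit set of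
the ancilla patch (`VV = [m_A] × [m_B]`, `CC = [r_Ā] × [r_B̄]`) and `T ≅ [r_Ā]` is the set of
interface qubits. -/
abbrev MQ (A : Type) (mA mB rA' rB' : ℕ) : Type :=
  A ⊕ (Fin mA × Fin mB) ⊕ (Fin rA' × Fin rB') ⊕ Fin rA'

/-- A vector supported on `A`, viewed in `F₂^M`. -/
def onA {A : Type} {mA mB rA' rB' : ℕ} (row : A → ZMod 2) : MQ A mA mB rA' rB' → ZMod 2
  | Sum.inl a => row a
  | _ => 0

/-- The `X`-check `s^X_{i,j}` of the ancilla patch `C` (the hypergraph product of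
`(H_Ā, H_B̄)`), viewed as a vector on `M`. -/
def sXC {A : Type} {mA mB rA' rB' : ℕ} (HAbar : Matrix (Fin rA') (Fin mA) (ZMod 2))
    (HBbar : Matrix (Fin rB') (Fin mB) (ZMod 2)) (i : Fin mA) (j : Fin rB') :
    MQ A mA mB rA' rB' → ZMod 2
  | Sum.inr (Sum.inl (k, l)) => if k = i then HBbar j l else 0
  | Sum.inr (Sum.inr (Sum.inl (k, l))) => if l = j then HAbar k i else 0
  | _ => 0

/-- The `Z`-check `s^Z_{i,j}` of the ancilla patch `C`, viewed as a vector on `M`. -/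
def sZC {A : Type} {mA mB rA' rB' : ℕ} (HAbar : Matrix (Fin rA') (Fin mA) (ZMod 2))
    (HBbar : Matrix (Fin rB') (Fin mB) (ZMod 2)) (i : Fin rA') (j : Fin mB) :
    MQ A mA mB rA' rB' → ZMod 2
  | Sum.inr (Sum.inl (k, l)) => if l = j then HAbar i k else 0
  | Sum.inr (Sum.inr (Sum.inl (k, l))) => if k = i then HBbar l j else 0
  | _ => 0

/-- The standard basis vector at interface qubit `T(i)`. -/
def eT {A : Type} {mA mB rA' rB' : ℕ} (i : Fin rA') : MQ A mA mB rA' rB' → ZMod 2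
  | Sum.inr (Sum.inr (Sum.inr j)) => if j = i then 1 else 0
  | _ => 0

/-- The standard basis vector at the `VV` qubit `(k, l)`. -/
def eVV {A : Type} {mA mB rA' rB' : ℕ} (k : Fin mA) (l : Fin mB) :
    MQ A mA mB rA' rB' → ZMod 2
  | Sum.inr (Sum.inl (k', l')) => if k' = k ∧ l' = l then 1 else 0
  | _ => 0

/-- The standard basis vector at the `A` qubit `a`. -/
def eA {A : Type} [DecidableEq A] {mA mB rA' rB' : ℕ} (a : A) :
    MQ A mA mB rA' rB' → ZMod 2
  | Sum.inl a' => if a' = a then 1 else 0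
  | _ => 0

/-- The merged-patch `X`-type stabilizer generator
`S^X_{T,i} = e_{ι_Ā(i)} + e_{VV(i,ℓ)} + Σ_j H_Ā[j,i] e_{T(j)}`. -/
def SXT {A : Type} [DecidableEq A] {mA mB rA' rB' : ℕ}
    (HAbar : Matrix (Fin rA') (Fin mA) (ZMod 2)) (ιA : Fin mA → A) (ℓ : Fin mB) (i : Fin mA) :
    MQ A mA mB rA' rB' → ZMod 2 :=
  eA (ιA i) + eVV i ℓ + ∑ j, HAbar j i • eT j

/-- The indicator of the column `{VV(i,ℓ)}_{i ∈ [m_A]}` of the ancilla patch, i.e. the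
logical `X̄_C`, viewed in `F₂^M`. -/
def XbarC {A : Type} {mA mB rA' rB' : ℕ} (ℓ : Fin mB) : MQ A mA mB rA' rB' → ZMod 2
  | Sum.inr (Sum.inl (_, l)) => if l = ℓ then 1 else 0
  | _ => 0


/-- The `X`-part `𝒢_X` of the gauge group of the merging subsystem code: the span of the rows
of `H_X^A`, the rows of `H_X^C`, and the `S^X_{T,i}`. -/
def GXgauge {A : Type} [Fintype A] [DecidableEq A] {rXA mA mB rA' rB' : ℕ}
    (HXA : Matrix (Fin rXA) A (ZMod 2))
    (HAbar : Matrix (Fin rA') (Fin mA) (ZMod 2)) (HBbar : Matrix (Fin rB') (Fin mB) (ZMod 2))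
    (ιA : Fin mA → A) (ℓ : Fin mB) :
    Submodule (ZMod 2) (MQ A mA mB rA' rB' → ZMod 2) :=
  Submodule.span (ZMod 2)
    ((Set.range fun i : Fin rXA => (onA (HXA i) : MQ A mA mB rA' rB' → ZMod 2)) ∪
      (Set.range fun p : Fin mA × Fin rB' => sXC HAbar HBbar p.1 p.2) ∪
      (Set.range (SXT HAbar ιA ℓ)))

/-- The `Z`-part `𝒢_Z` of the gauge group of the merging subsystem code: the span of the rows
of `H_Z^A`, the rows of `H_Z^C`, the `z^A_i + e_{T(i)}`, the `s^Z_{i,ℓ} + e_{T(i)}`, and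
`z̄_A`. -/
def GZgauge {A : Type} [Fintype A] [DecidableEq A] {rZA mA mB rA' rB' : ℕ}
    (HZA : Matrix (Fin rZA) A (ZMod 2))
    (HAbar : Matrix (Fin rA') (Fin mA) (ZMod 2)) (HBbar : Matrix (Fin rB') (Fin mB) (ZMod 2))
    (ρ : Fin rA' → Fin rZA) (ℓ : Fin mB) (zA0 : A → ZMod 2) :
    Submodule (ZMod 2) (MQ A mA mB rA' rB' → ZMod 2) :=
  Submodule.span (ZMod 2)
    ((Set.range fun i : Fin rZA => (onA (HZA i) : MQ A mA mB rA' rB' → ZMod 2)) ∪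
      (Set.range fun p : Fin rA' × Fin mB => sZC HAbar HBbar p.1 p.2) ∪
      (Set.range fun i : Fin rA' => onA (HZA (ρ i)) + eT i) ∪
      (Set.range fun i : Fin rA' => sZC HAbar HBbar i ℓ + eT i) ∪
      {onA zA0})

/-- The `X`-part of the stabilizer group of the merging subsystem code:
`S_X = {x ∈ 𝒢_X : ⟨x, z⟩ = 0 for all z ∈ 𝒢_Z}`. -/
def SXstab {A : Type} [Fintype A] [DecidableEq A] {rXA rZA mA mB rA' rB' : ℕ}
    (HXA : Matrix (Fin rXA) A (ZMod 2)) (HZA : Matrix (Fin rZA) A (ZMod 2))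
    (HAbar : Matrix (Fin rA') (Fin mA) (ZMod 2)) (HBbar : Matrix (Fin rB') (Fin mB) (ZMod 2))
    (ιA : Fin mA → A) (ρ : Fin rA' → Fin rZA) (ℓ : Fin mB) (zA0 : A → ZMod 2) :
    Set (MQ A mA mB rA' rB' → ZMod 2) :=
  {x | x ∈ GXgauge HXA HAbar HBbar ιA ℓ ∧
    ∀ z ∈ GZgauge HZA HAbar HBbar ρ ℓ zA0, bform x z = 0}

/-- The `Z`-part of the stabilizer group of the merging subsystem code:
`S_Z = {z ∈ 𝒢_Z : ⟨z, x⟩ = 0 for all x ∈ 𝒢_X}`. -/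
def SZstab {A : Type} [Fintype A] [DecidableEq A] {rXA rZA mA mB rA' rB' : ℕ}
    (HXA : Matrix (Fin rXA) A (ZMod 2)) (HZA : Matrix (Fin rZA) A (ZMod 2))
    (HAbar : Matrix (Fin rA') (Fin mA) (ZMod 2)) (HBbar : Matrix (Fin rB') (Fin mB) (ZMod 2))
    (ιA : Fin mA → A) (ρ : Fin rA' → Fin rZA) (ℓ : Fin mB) (zA0 : A → ZMod 2) :
    Set (MQ A mA mB rA' rB' → ZMod 2) :=
  {z | z ∈ GZgauge HZA HAbar HBbar ρ ℓ zA0 ∧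
    ∀ x ∈ GXgauge HXA HAbar HBbar ιA ℓ, bform z x = 0}

/-!
Suppose `(v_X, v_Z)` commutes with the stabilizers and has weight `< min d_A d_B`.

On the ancilla, the `Z`-checks `s^Z_{i,j}` (`j ≠ ℓ`) and the `s^Z_{i,ℓ} + e_{T(i)}` force the
`VV`/`CC` parts `(V, W)` of `v_X` and its `T` part `t` to satisfy `H_Ā V + W H_B̄ = t e_ℓᵀ`.
Because `ker H_B̄ = ⟨𝟙⟩` and `ker H_B̄ᵀ = 0`, this gives `V = s e_ℓᵀ + N H_B̄`, `W = H_Ā N` and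
`t = H_Ā s` with `s = V 𝟙`. Multiplying `v_X` by `Σ s_k S^X_{T,k}` and by the `X`-checks of `C`
chosen by `N` moves it onto `A`. What is left is an `X`-logical of `A` of weight at most
`wt v_X < d_A`, so it is a stabilizer, and hence `v_X ∈ 𝒢_X`.

For `v_Z`, the part on `A` is a `Z`-logical of `A` of weight `< d_A`, so it is a stabilizer. The
`VV` part misses some column, since `m_B = wt z̄_B ≥ d_B`. Commuting with the `X`-checks of `C`
gives `V H_B̄ᵀ = H_Āᵀ W`, and a missing column makes `(V, W)` a sum of `Z`-checks of `C`.
The `T` part is already in `𝒢_Z`, so `v_Z ∈ 𝒢_Z`.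
-/

open Matrix

section LinearAlgebra

variable {K α β : Type*} [Field K] [Fintype β]

theorem Matrix.mulVec_surjective_of_ker_transpose_eq_bot [Fintype α] {N : Matrix α β K}
    (h : LinearMap.ker Nᵀ.mulVecLin = ⊥) : Function.Surjective N.mulVec := by
  have hrange : LinearMap.range N.mulVecLin = ⊤ := by
    apply Submodule.eq_top_of_finrank_eq
    rw [← Matrix.rank, ← rank_transpose, Matrix.rank,
      LinearMap.finrank_range_of_inj (LinearMap.ker_eq_bot.mp h)]
  exact fun f => LinearMap.range_eq_top.mp hrange f

theorem Matrix.mulVec_one_eq_zero_of_ker_eq_span_one {N : Matrix α β K}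
    (h : LinearMap.ker N.mulVecLin = K ∙ 1) : N *ᵥ 1 = 0 :=
  LinearMap.mem_ker.mp (h ▸ Submodule.mem_span_singleton_self 1)

/-- The special case `ker N = K ∙ 𝟙` of `range Nᵀ = (ker N)ᗮ`. -/
theorem Matrix.exists_eq_sum_smul_single_add_transpose_mulVec [Fintype α] [DecidableEq β]
    {N : Matrix α β K} (h : LinearMap.ker N.mulVecLin = K ∙ 1) (ℓ : β) (f : β → K) :
    ∃ u, f = (∑ i, f i) • Pi.single ℓ 1 + Nᵀ *ᵥ u := by
  let σ : (β → K) →ₗ[K] K := dotProductBilin K K 1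
  have hσ (g : β → K) : σ g = ∑ i, g i := one_dotProduct g
  have hle : LinearMap.range Nᵀ.mulVecLin ≤ LinearMap.ker σ := by
    rintro _ ⟨u, rfl⟩
    rw [LinearMap.mem_ker, Matrix.mulVecLin_apply]
    change 1 ⬝ᵥ (Nᵀ *ᵥ u) = 0
    rw [dotProduct_mulVec, vecMul_transpose, mulVec_one_eq_zero_of_ker_eq_span_one h,
      zero_dotProduct]
  have hσsurj : LinearMap.range σ = ⊤ :=
    LinearMap.range_eq_top.mpr fun c => ⟨c • Pi.single ℓ 1, by simp [hσ, Pi.single_apply]⟩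
  have hone : (1 : β → K) ≠ 0 := fun h1 => one_ne_zero (congrFun h1 ℓ)
  have hrange : LinearMap.range Nᵀ.mulVecLin = LinearMap.ker σ := by
    refine Submodule.eq_of_le_of_finrank_eq hle ?_
    have hN := LinearMap.finrank_range_add_finrank_ker N.mulVecLin
    have hσ' := LinearMap.finrank_range_add_finrank_ker σ
    rw [h, finrank_span_singleton hone] at hN
    rw [hσsurj, finrank_top, Module.finrank_self] at hσ'
    rw [← Matrix.rank, rank_transpose, Matrix.rank]
    omega
  obtain ⟨u, hu⟩ : f - (∑ i, f i) • Pi.single ℓ 1 ∈ LinearMap.range Nᵀ.mulVecLin := by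
    rw [hrange, LinearMap.mem_ker, map_sub, map_smul, hσ, hσ]
    simp
  exact ⟨u, by rw [Matrix.mulVecLin_apply] at hu; rw [hu]; abel⟩

theorem Matrix.dotProduct_eq_zero_of_mul_transpose_eq_zero {R γ : Type*} [CommSemiring R]
    {P : Matrix α β R} {Q : Matrix γ β R} (h : P * Qᵀ = 0) (i : α) (j : γ) : P i ⬝ᵥ Q j = 0 := by
  simpa [mul_apply'] using congrFun₂ h i j

end LinearAlgebra

theorem Submodule.eq_span_singleton_of_coe_eq_pair {V : Type*} [AddCommGroup V]
    [Module (ZMod 2) V] {p : Submodule (ZMod 2) V} {x : V} (h : (p : Set V) = {0, x}) :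
    p = ZMod 2 ∙ x := by
  ext v
  rw [Submodule.mem_span_singleton, ← SetLike.mem_coe, h]
  constructor
  · rintro (rfl | rfl)
    exacts [⟨0, zero_smul _ _⟩, ⟨1, one_smul _ _⟩]
  · rintro ⟨c, rfl⟩
    fin_cases c
    exacts [.inl (zero_smul _ x), .inr (one_smul _ x)]

section HypergraphProduct

variable {K α β γ δ : Type*} [Field K] [Fintype β] {P : Matrix γ α K} {Q : Matrix δ β K}

/-- A `Z`-operator `(V, W)` on the hypergraph product of `(P, Q)` that commutes with the
`X`-checks and misses a column of `V` is a product of `Z`-checks. -/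
theorem Matrix.exists_eq_transpose_mul_and_eq_mul_transpose [Fintype γ]
    (hQ : Function.Surjective Q.mulVec) (hker : LinearMap.ker Q.mulVecLin = K ∙ 1)
    {V : Matrix α β K} {W : Matrix γ δ K} (hVW : V * Qᵀ = Pᵀ * W) {l₀ : β} (hl₀ : ∀ k, V k l₀ = 0) :
    ∃ M : Matrix γ β K, V = Pᵀ * M ∧ W = M * Qᵀ := by
  obtain ⟨M₀, hM₀⟩ : ∃ M₀ : Matrix γ β K, ∀ i, Q *ᵥ M₀ i = W i :=
    ⟨_, fun i => (hQ (W i)).choose_spec⟩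
  have hW : W = M₀ * Qᵀ := by
    ext i j
    rw [mul_apply_eq_vecMul, vecMul_transpose, hM₀]
  have hrow (k : α) : ∃ c : K, c • 1 = V k - (Pᵀ * M₀) k := by
    rw [← Submodule.mem_span_singleton, ← hker, LinearMap.mem_ker, mulVecLin_apply, mulVec_sub,
      ← vecMul_transpose, ← vecMul_transpose, ← mul_apply_eq_vecMul, ← mul_apply_eq_vecMul,
      hVW, Matrix.mul_assoc, ← hW, sub_self]
  choose c hc using hrow
  let col : γ → K := fun i => M₀ i l₀
  have hc' : c = -(Pᵀ *ᵥ col) := by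
    ext k
    have := congrFun (hc k) l₀
    simp only [Pi.smul_apply, Pi.one_apply, smul_eq_mul, mul_one, Pi.sub_apply, hl₀] at this
    rw [this, zero_sub, Pi.neg_apply]
    rfl
  refine ⟨M₀ - vecMulVec col 1, ?_, ?_⟩
  · ext k l
    have := congrFun (hc k) l
    simp only [Pi.smul_apply, Pi.one_apply, smul_eq_mul, mul_one, Pi.sub_apply] at this
    rw [Matrix.mul_sub, mul_vecMulVec, Matrix.sub_apply, vecMulVec_apply, Pi.one_apply, mul_one,
      ← neg_neg (Pᵀ *ᵥ col), ← hc', Pi.neg_apply, this]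
    ring
  · rw [Matrix.sub_mul, vecMulVec_mul, vecMul_transpose,
      mulVec_one_eq_zero_of_ker_eq_span_one hker, ← hW]
    ext
    simp [vecMulVec_apply]

/-- Here `(V, W)` is an `X`-operator on the hypergraph product of `(P, Q)` and `t e_ℓᵀ` is its
syndrome under the `Z`-checks. -/
theorem Matrix.exists_eq_vecMulVec_add_mul [Fintype α] [Fintype δ] [DecidableEq β]
    (hQ : LinearMap.ker Qᵀ.mulVecLin = ⊥) (hker : LinearMap.ker Q.mulVecLin = K ∙ 1) (ℓ : β)
    {V : Matrix α β K} {W : Matrix γ δ K} {t : γ → K}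
    (h : P * V + W * Q = vecMulVec t (Pi.single ℓ 1)) :
    ∃ N : Matrix α δ K, V = vecMulVec (V *ᵥ 1) (Pi.single ℓ 1) + N * Q ∧ W = -(P * N) ∧
      t = P *ᵥ (V *ᵥ 1) := by
  obtain ⟨N, hN⟩ : ∃ N : Matrix α δ K, ∀ k, V k = (∑ l, V k l) • Pi.single ℓ 1 + Qᵀ *ᵥ N k :=
    ⟨_, fun k => (exists_eq_sum_smul_single_add_transpose_mulVec hker ℓ (V k)).choose_spec⟩
  have hV : V = vecMulVec (V *ᵥ 1) (Pi.single ℓ 1) + N * Q := by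
    ext k l
    rw [congrFun (hN k) l, Matrix.add_apply, mul_apply_eq_vecMul, ← mulVec_transpose]
    simp [vecMulVec_apply, mulVec, dotProduct]
  have hNW : (P * N + W) * Q = vecMulVec (t - P *ᵥ (V *ᵥ 1)) (Pi.single ℓ 1) := by
    have hPV : P * V = vecMulVec (P *ᵥ (V *ᵥ 1)) (Pi.single ℓ 1) + P * N * Q := by
      conv_lhs => rw [hV]
      rw [Matrix.mul_add, mul_vecMulVec, Matrix.mul_assoc]
    rw [Matrix.add_mul, sub_vecMulVec, ← h, hPV]
    abel
  have ht : t = P *ᵥ (V *ᵥ 1) := by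
    have := congrArg (· *ᵥ 1) hNW
    simp only [← mulVec_mulVec, mulVec_one_eq_zero_of_ker_eq_span_one hker, mulVec_zero,
      vecMulVec_mulVec] at this
    simpa [sub_eq_zero, dotProduct, Pi.single_apply, eq_comm] using this.symm
  refine ⟨N, hV, ?_, ht⟩
  have hrow (i : γ) : (P * N + W) i = 0 := by
    rw [← Submodule.mem_bot K, ← hQ, LinearMap.mem_ker, mulVecLin_apply, ← vecMul_transpose,
      transpose_transpose, ← mul_apply_eq_vecMul, hNW, ht, sub_self]
    ext
    simp [vecMulVec_apply]
  rw [eq_neg_iff_add_eq_zero, add_comm]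
  exact funext hrow

end HypergraphProduct

section Weight

variable {ι κ : Type} [Fintype ι] [Fintype κ]

theorem wt_sumElim (f : ι → ZMod 2) (g : κ → ZMod 2) : wt (Sum.elim f g) = wt f + wt g := by
  simp only [wt, Finset.card_filter, Fintype.sum_sum_type]
  rfl

theorem wt_add_le (u v : ι → ZMod 2) : wt (u + v) ≤ wt u + wt v := by
  classical
  refine (Finset.card_le_card fun i => ?_).trans (Finset.card_union_le _ _)
  simp only [Finset.mem_filter, Finset.mem_univ, true_and, Finset.mem_union, Pi.add_apply]
  contrapose!
  rintro ⟨hu, hv⟩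
  simp [hu, hv]

theorem wt_le_card_of_forall_ne_zero_mem_range {v : ι → ZMod 2} (f : κ → ι)
    (h : ∀ i, v i ≠ 0 → i ∈ Set.range f) : wt v ≤ Fintype.card κ :=
  Finset.card_le_card_of_surjOn f fun i hi => by simpa using h i (by simpa using hi)

theorem wt_sum_smul_single_le [DecidableEq ι] (f : κ → ι) (s : κ → ZMod 2) :
    wt (∑ k, s k • Pi.single (f k) 1) ≤ wt s := by
  refine Finset.card_le_card_of_surjOn f fun i hi => ?_
  by_contra! h
  simp only [Finset.coe_filter, Finset.mem_univ, true_and, Set.mem_ofPred_eq, Set.mem_image,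
    not_exists, not_and] at hi h
  refine hi ?_
  rw [Finset.sum_apply]
  refine Finset.sum_eq_zero fun k _ => ?_
  by_cases hk : f k = i
  · simp [hk, not_not.mp fun hs => h k hs hk]
  · simp [Ne.symm hk]

theorem wt_mulVec_one_le (V : Matrix ι κ (ZMod 2)) :
    wt (V *ᵥ 1) ≤ wt (fun p : ι × κ => V p.1 p.2) := by
  refine Finset.card_le_card_of_surjOn Prod.fst fun k hk => ?_
  obtain ⟨l, hl⟩ : ∃ l, V k l ≠ 0 := by
    by_contra! h
    simp [mulVec, dotProduct, h] at hk
  exact ⟨(k, l), by simpa using hl, rfl⟩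

theorem exists_forall_eq_zero_of_wt_lt {V : Matrix ι κ (ZMod 2)}
    (h : wt (fun p : ι × κ => V p.1 p.2) < Fintype.card κ) : ∃ l, ∀ k, V k l = 0 := by
  by_contra! hV
  refine h.not_ge (Finset.card_le_card_of_surjOn Prod.snd fun l _ => ?_)
  obtain ⟨k, hk⟩ := hV l
  exact ⟨(k, l), by simpa using hk, rfl⟩

end Weight

theorem bform_add_right {ι : Type} [Fintype ι] (u v w : ι → ZMod 2) :
    bform u (v + w) = bform u v + bform u w :=
  dotProduct_add u v w

theorem bform_eq_zero_of_mem_span {ι : Type} [Fintype ι] {S : Set (ι → ZMod 2)}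
    {u x : ι → ZMod 2} (h : ∀ g ∈ S, bform u g = 0) (hx : x ∈ Submodule.span (ZMod 2) S) :
    bform u x = 0 :=
  (Submodule.span_le (p := LinearMap.ker (dotProductBilin (ZMod 2) (ZMod 2) u))).mpr h hx

section onA

variable {A : Type} {mA mB rA' rB' : ℕ}

@[simp]
theorem onA_zero : (onA 0 : MQ A mA mB rA' rB' → ZMod 2) = 0 := by
  funext q; rcases q with _ | _ | _ | _ <;> rfl

theorem onA_add (r r' : A → ZMod 2) :
    (onA (r + r') : MQ A mA mB rA' rB' → ZMod 2) = onA r + onA r' := by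
  funext q; rcases q with _ | _ | _ | _ <;> simp [onA]

theorem onA_smul (c : ZMod 2) (r : A → ZMod 2) :
    (onA (c • r) : MQ A mA mB rA' rB' → ZMod 2) = c • onA r := by
  funext q; rcases q with _ | _ | _ | _ <;> simp [onA]

theorem onA_mem_of_mem_rowSpan [Fintype A] {n : ℕ} {H : Matrix (Fin n) A (ZMod 2)}
    {p : Submodule (ZMod 2) (MQ A mA mB rA' rB' → ZMod 2)} (hp : ∀ i, onA (H i) ∈ p)
    {r : A → ZMod 2} (hr : r ∈ rowSpan H) : onA r ∈ p := by
  induction hr using Submodule.span_induction with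
  | mem _ h => obtain ⟨i, rfl⟩ := h; exact hp i
  | zero => simp
  | add x y _ _ hx hy => simpa [onA_add] using p.add_mem hx hy
  | smul c x _ hx => simpa [onA_smul] using p.smul_mem c hx

end onA

namespace MQ

variable {A : Type} {mA mB rA' rB' : ℕ}

/-- The vector on `M` whose restrictions to `A`, `VV`, `CC` and `T` are `a`, `V`, `W` and `t`. -/
def ofParts (a : A → ZMod 2) (V : Matrix (Fin mA) (Fin mB) (ZMod 2))
    (W : Matrix (Fin rA') (Fin rB') (ZMod 2)) (t : Fin rA' → ZMod 2) :
    MQ A mA mB rA' rB' → ZMod 2 :=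
  Sum.elim a (Sum.elim (fun p => V p.1 p.2) (Sum.elim (fun p => W p.1 p.2) t))

theorem ofParts_surjective (v : MQ A mA mB rA' rB' → ZMod 2) :
    ∃ a V W t, ofParts a V W t = v :=
  ⟨fun x => v (.inl x), fun k l => v (.inr (.inl (k, l))),
    fun k l => v (.inr (.inr (.inl (k, l)))), fun i => v (.inr (.inr (.inr i))),
    by funext q; rcases q with _ | _ | _ | _ <;> rfl⟩

theorem ofParts_add (a a' : A → ZMod 2) (V V' : Matrix (Fin mA) (Fin mB) (ZMod 2))
    (W W' : Matrix (Fin rA') (Fin rB') (ZMod 2)) (t t' : Fin rA' → ZMod 2) :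
    ofParts a V W t + ofParts a' V' W' t' = ofParts (a + a') (V + V') (W + W') (t + t') := by
  funext q; rcases q with _ | _ | _ | _ <;> rfl

theorem wt_ofParts [Fintype A] (a : A → ZMod 2) (V : Matrix (Fin mA) (Fin mB) (ZMod 2))
    (W : Matrix (Fin rA') (Fin rB') (ZMod 2)) (t : Fin rA' → ZMod 2) :
    wt (ofParts a V W t) = wt a + (wt (fun p : Fin mA × Fin mB => V p.1 p.2) +
      (wt (fun p : Fin rA' × Fin rB' => W p.1 p.2) + wt t)) := by
  simp only [ofParts, wt_sumElim]

variable (P : Matrix (Fin rA') (Fin mA) (ZMod 2)) (Q : Matrix (Fin rB') (Fin mB) (ZMod 2))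

theorem onA_eq_ofParts (r : A → ZMod 2) :
    (onA r : MQ A mA mB rA' rB' → ZMod 2) = ofParts r 0 0 0 := by
  funext q; rcases q with _ | _ | _ | _ <;> rfl

theorem eT_eq_ofParts (i : Fin rA') :
    (eT i : MQ A mA mB rA' rB' → ZMod 2) = ofParts 0 0 0 (Pi.single i 1) := by
  funext q; rcases q with _ | _ | _ | _ <;> simp [eT, ofParts, Pi.single_apply]

theorem sZC_eq_ofParts (i : Fin rA') (j : Fin mB) :
    (sZC P Q i j : MQ A mA mB rA' rB' → ZMod 2)
      = ofParts 0 (vecMulVec (P i) (Pi.single j 1)) (vecMulVec (Pi.single i 1) (Qᵀ j)) 0 := by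
  funext q; rcases q with _ | _ | _ | _ <;> simp [sZC, ofParts, vecMulVec_apply, Pi.single_apply]

theorem sXC_eq_ofParts (i : Fin mA) (j : Fin rB') :
    (sXC P Q i j : MQ A mA mB rA' rB' → ZMod 2)
      = ofParts 0 (vecMulVec (Pi.single i 1) (Q j)) (vecMulVec (Pᵀ i) (Pi.single j 1)) 0 := by
  funext q; rcases q with _ | _ | _ | _ <;> simp [sXC, ofParts, vecMulVec_apply, Pi.single_apply]

variable [Fintype A] (a : A → ZMod 2) (V : Matrix (Fin mA) (Fin mB) (ZMod 2))
  (W : Matrix (Fin rA') (Fin rB') (ZMod 2)) (t : Fin rA' → ZMod 2)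

theorem bform_ofParts_onA (r : A → ZMod 2) : bform (ofParts a V W t) (onA r) = a ⬝ᵥ r := by
  simp [bform, ofParts, onA, Fintype.sum_sum_type, dotProduct]

theorem bform_ofParts_eT (i : Fin rA') : bform (ofParts a V W t) (eT i) = t i := by
  simp [bform, ofParts, eT, Fintype.sum_sum_type]

theorem bform_ofParts_sZC (i : Fin rA') (j : Fin mB) :
    bform (ofParts a V W t) (sZC P Q i j) = (P * V) i j + (W * Q) i j := by
  simp [bform, ofParts, sZC, Fintype.sum_sum_type, Fintype.sum_prod_type, mul_apply, mul_comm]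

theorem bform_ofParts_sXC (i : Fin mA) (j : Fin rB') :
    bform (ofParts a V W t) (sXC P Q i j) = (V * Qᵀ) i j + (Pᵀ * W) i j := by
  simp [bform, ofParts, sXC, Fintype.sum_sum_type, Fintype.sum_prod_type, mul_apply, mul_comm]

theorem bform_ofParts_SXT [DecidableEq A] (ιA : Fin mA → A) (ℓ : Fin mB) (k : Fin mA) :
    bform (ofParts a V W t) (SXT P ιA ℓ k) = a (ιA k) + V k ℓ + (Pᵀ *ᵥ t) k := by
  simp [bform, ofParts, SXT, eA, eVV, eT, Fintype.sum_sum_type, Fintype.sum_prod_type, mulVec,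
    dotProduct, mul_comm, ite_and, add_assoc]

end MQ

open MQ

section Gauge

variable {A : Type} [Fintype A] [DecidableEq A] {rXA rZA mA mB rA' rB' : ℕ}
  {HXA : Matrix (Fin rXA) A (ZMod 2)} {HZA : Matrix (Fin rZA) A (ZMod 2)}
  {HAbar : Matrix (Fin rA') (Fin mA) (ZMod 2)} {HBbar : Matrix (Fin rB') (Fin mB) (ZMod 2)}
  {ιA : Fin mA → A} {ρ : Fin rA' → Fin rZA} {ℓ : Fin mB} {zA0 : A → ZMod 2}

theorem onA_mem_GXgauge (r : Fin rXA) : onA (HXA r) ∈ GXgauge HXA HAbar HBbar ιA ℓ :=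
  Submodule.subset_span (.inl (.inl ⟨r, rfl⟩))

theorem sXC_mem_GXgauge (i : Fin mA) (j : Fin rB') :
    sXC HAbar HBbar i j ∈ GXgauge HXA HAbar HBbar ιA ℓ :=
  Submodule.subset_span (.inl (.inr ⟨(i, j), rfl⟩))

theorem SXT_mem_GXgauge (k : Fin mA) : SXT HAbar ιA ℓ k ∈ GXgauge HXA HAbar HBbar ιA ℓ :=
  Submodule.subset_span (.inr ⟨k, rfl⟩)

theorem onA_mem_GZgauge (r : Fin rZA) : onA (HZA r) ∈ GZgauge HZA HAbar HBbar ρ ℓ zA0 :=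
  Submodule.subset_span (.inl (.inl (.inl (.inl ⟨r, rfl⟩))))

theorem sZC_mem_GZgauge (i : Fin rA') (j : Fin mB) :
    sZC HAbar HBbar i j ∈ GZgauge HZA HAbar HBbar ρ ℓ zA0 :=
  Submodule.subset_span (.inl (.inl (.inl (.inr ⟨(i, j), rfl⟩))))

theorem onA_add_eT_mem_GZgauge (i : Fin rA') :
    onA (HZA (ρ i)) + eT i ∈ GZgauge HZA HAbar HBbar ρ ℓ zA0 :=
  Submodule.subset_span (.inl (.inl (.inr ⟨i, rfl⟩)))

theorem sZC_add_eT_mem_GZgauge (i : Fin rA') :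
    sZC HAbar HBbar i ℓ + eT i ∈ GZgauge HZA HAbar HBbar ρ ℓ zA0 :=
  Submodule.subset_span (.inl (.inr ⟨i, rfl⟩))

theorem eT_mem_GZgauge (i : Fin rA') : eT i ∈ GZgauge HZA HAbar HBbar ρ ℓ zA0 := by
  have h : onA (HZA (ρ i)) + eT i - onA (HZA (ρ i)) ∈ GZgauge HZA HAbar HBbar ρ ℓ zA0 :=
    sub_mem (onA_add_eT_mem_GZgauge i) (onA_mem_GZgauge (ρ i))
  rwa [add_sub_cancel_left] at h

theorem mem_SZstab_of_mem_GZgauge {z : MQ A mA mB rA' rB' → ZMod 2}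
    (hz : z ∈ GZgauge HZA HAbar HBbar ρ ℓ zA0) (h₁ : ∀ r, bform z (onA (HXA r)) = 0)
    (h₂ : ∀ i j, bform z (sXC HAbar HBbar i j) = 0) (h₃ : ∀ k, bform z (SXT HAbar ιA ℓ k) = 0) :
    z ∈ SZstab HXA HZA HAbar HBbar ιA ρ ℓ zA0 := by
  refine ⟨hz, fun x hx => bform_eq_zero_of_mem_span ?_ hx⟩
  rintro _ ((⟨r, rfl⟩ | ⟨⟨i, j⟩, rfl⟩) | ⟨k, rfl⟩)
  exacts [h₁ r, h₂ i j, h₃ k]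

theorem mem_SXstab_of_mem_GXgauge {x : MQ A mA mB rA' rB' → ZMod 2}
    (hx : x ∈ GXgauge HXA HAbar HBbar ιA ℓ) (h₁ : ∀ r, bform x (onA (HZA r)) = 0)
    (h₂ : ∀ i j, bform x (sZC HAbar HBbar i j) = 0)
    (h₃ : ∀ i, bform x (onA (HZA (ρ i)) + eT i) = 0)
    (h₄ : ∀ i, bform x (sZC HAbar HBbar i ℓ + eT i) = 0) (h₅ : bform x (onA zA0) = 0) :
    x ∈ SXstab HXA HZA HAbar HBbar ιA ρ ℓ zA0 := by
  refine ⟨hx, fun z hz => bform_eq_zero_of_mem_span ?_ hz⟩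
  rintro _ ((((⟨r, rfl⟩ | ⟨⟨i, j⟩, rfl⟩) | ⟨i, rfl⟩) | ⟨i, rfl⟩) | rfl)
  exacts [h₁ r, h₂ i j, h₃ i, h₄ i, h₅]

end Gauge

section Stabilizer

variable {A : Type} [Fintype A] [DecidableEq A] {rXA rZA mA mB rA' rB' : ℕ}
  {HXA : Matrix (Fin rXA) A (ZMod 2)} {HZA : Matrix (Fin rZA) A (ZMod 2)}
  {HAbar : Matrix (Fin rA') (Fin mA) (ZMod 2)} {HBbar : Matrix (Fin rB') (Fin mB) (ZMod 2)}
  {ιA : Fin mA → A} {ρ : Fin rA' → Fin rZA} {ℓ : Fin mB} {zA0 : A → ZMod 2}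

theorem onA_mem_SZstab (hOrthA : HXA * HZA.transpose = 0) {j : Fin rZA}
    (hj : ∀ k, HZA j (ιA k) = 0) :
    onA (HZA j) ∈ SZstab HXA HZA HAbar HBbar ιA ρ ℓ zA0 := by
  refine mem_SZstab_of_mem_GZgauge (onA_mem_GZgauge j) (fun r => ?_) (fun i m => ?_)
    (fun k => ?_) <;>
    rw [onA_eq_ofParts (HZA j)] <;>
    simp [bform_ofParts_onA, bform_ofParts_sXC, bform_ofParts_SXT, hj, dotProduct_comm,
      dotProduct_eq_zero_of_mul_transpose_eq_zero hOrthA]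

theorem onA_add_eT_mem_SZstab (hOrthA : HXA * HZA.transpose = 0)
    (hHAbar : ∀ i k, HAbar i k = HZA (ρ i) (ιA k)) (i : Fin rA') :
    onA (HZA (ρ i)) + eT i ∈ SZstab HXA HZA HAbar HBbar ιA ρ ℓ zA0 := by
  refine mem_SZstab_of_mem_GZgauge (onA_add_eT_mem_GZgauge i) (fun r => ?_) (fun i j => ?_)
    (fun k => ?_) <;>
    rw [onA_eq_ofParts, eT_eq_ofParts, ofParts_add] <;>
    simp [bform_ofParts_onA, bform_ofParts_sXC, bform_ofParts_SXT, dotProduct_comm,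
      dotProduct_eq_zero_of_mul_transpose_eq_zero hOrthA, hHAbar, ZModModule.add_self]

theorem sZC_mem_SZstab (i : Fin rA') {j : Fin mB} (hj : j ≠ ℓ) :
    sZC HAbar HBbar i j ∈ SZstab HXA HZA HAbar HBbar ιA ρ ℓ zA0 := by
  refine mem_SZstab_of_mem_GZgauge (sZC_mem_GZgauge i j) (fun r => ?_) (fun k m => ?_)
    (fun k => ?_) <;>
    rw [sZC_eq_ofParts] <;>
    simp [bform_ofParts_onA, bform_ofParts_sXC, bform_ofParts_SXT, vecMulVec_mul, mul_vecMulVec,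
      vecMulVec_apply, hj.symm, ZModModule.add_self]

theorem sZC_add_eT_mem_SZstab (i : Fin rA') :
    sZC HAbar HBbar i ℓ + eT i ∈ SZstab HXA HZA HAbar HBbar ιA ρ ℓ zA0 := by
  refine mem_SZstab_of_mem_GZgauge (sZC_add_eT_mem_GZgauge i) (fun r => ?_) (fun k m => ?_)
    (fun k => ?_) <;>
    rw [sZC_eq_ofParts, eT_eq_ofParts, ofParts_add] <;>
    simp [bform_ofParts_onA, bform_ofParts_sXC, bform_ofParts_SXT, vecMulVec_mul, mul_vecMulVec,
      vecMulVec_apply, ZModModule.add_self]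

theorem onA_mem_SXstab (hOrthA : HXA * HZA.transpose = 0) (hzA0ker : HXA.mulVec zA0 = 0)
    (r : Fin rXA) : onA (HXA r) ∈ SXstab HXA HZA HAbar HBbar ιA ρ ℓ zA0 := by
  refine mem_SXstab_of_mem_GXgauge (onA_mem_GXgauge r) (fun j => ?_) (fun i j => ?_) (fun i => ?_)
    (fun i => ?_) ?_ <;>
    rw [onA_eq_ofParts (HXA r)] <;>
    simp [bform_add_right, bform_ofParts_onA, bform_ofParts_sZC, bform_ofParts_eT,
      dotProduct_eq_zero_of_mul_transpose_eq_zero hOrthA]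
  simpa [mulVec] using congrFun hzA0ker r

theorem sXC_mem_SXstab (i : Fin mA) (j : Fin rB') :
    sXC HAbar HBbar i j ∈ SXstab HXA HZA HAbar HBbar ιA ρ ℓ zA0 := by
  refine mem_SXstab_of_mem_GXgauge (sXC_mem_GXgauge i j) (fun r => ?_) (fun k m => ?_) (fun k => ?_)
    (fun k => ?_) ?_ <;>
    rw [sXC_eq_ofParts] <;>
    simp [bform_add_right, bform_ofParts_onA, bform_ofParts_sZC, bform_ofParts_eT,
      vecMulVec_mul, mul_vecMulVec, vecMulVec_apply, ZModModule.add_self]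

end Stabilizer

section LinearCombinations

variable {A : Type} {mA mB rA' rB' : ℕ}
  (P : Matrix (Fin rA') (Fin mA) (ZMod 2)) (Q : Matrix (Fin rB') (Fin mB) (ZMod 2))

theorem sum_smul_SXT [DecidableEq A] (ιA : Fin mA → A) (ℓ : Fin mB) (s : Fin mA → ZMod 2) :
    ∑ k, s k • SXT P ιA ℓ k
      = (ofParts (∑ k, s k • Pi.single (ιA k) 1) (vecMulVec s (Pi.single ℓ 1)) 0 (P *ᵥ s) :
          MQ A mA mB rA' rB' → ZMod 2) := by
  funext q
  rcases q with x | ⟨k, l⟩ | ⟨k, l⟩ | i <;>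
    simp [SXT, ofParts, eA, eVV, eT, vecMulVec_apply, mulVec, dotProduct, Pi.single_apply, ite_and,
      mul_comm, eq_comm]

theorem sum_smul_sXC (N : Matrix (Fin mA) (Fin rB') (ZMod 2)) :
    ∑ p : Fin mA × Fin rB', N p.1 p.2 • sXC P Q p.1 p.2
      = (ofParts 0 (N * Q) (P * N) 0 : MQ A mA mB rA' rB' → ZMod 2) := by
  funext q
  rcases q with x | ⟨k, l⟩ | ⟨k, l⟩ | i <;>
    simp [sXC, ofParts, mul_apply, Fintype.sum_prod_type, mul_comm]

theorem sum_smul_sZC (M : Matrix (Fin rA') (Fin mB) (ZMod 2)) :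
    ∑ p : Fin rA' × Fin mB, M p.1 p.2 • sZC P Q p.1 p.2
      = (ofParts 0 (Pᵀ * M) (M * Qᵀ) 0 : MQ A mA mB rA' rB' → ZMod 2) := by
  funext q
  rcases q with x | ⟨k, l⟩ | ⟨k, l⟩ | i <;>
    simp [sZC, ofParts, mul_apply, Fintype.sum_prod_type, mul_comm]

theorem sum_smul_eT (t : Fin rA' → ZMod 2) :
    ∑ i, t i • eT i = (ofParts 0 0 0 t : MQ A mA mB rA' rB' → ZMod 2) := by
  funext q
  rcases q with x | ⟨k, l⟩ | ⟨k, l⟩ | i <;> simp [eT, ofParts]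

end LinearCombinations

section Cleaning

variable {A : Type} [Fintype A] [DecidableEq A] {rXA rZA mA mB rA' rB' : ℕ}
  {HXA : Matrix (Fin rXA) A (ZMod 2)} {HZA : Matrix (Fin rZA) A (ZMod 2)}
  {HAbar : Matrix (Fin rA') (Fin mA) (ZMod 2)} {HBbar : Matrix (Fin rB') (Fin mB) (ZMod 2)}
  {ιA : Fin mA → A} {ρ : Fin rA' → Fin rZA} {ℓ : Fin mB} {zA0 : A → ZMod 2}
  {a : A → ZMod 2} {V : Matrix (Fin mA) (Fin mB) (ZMod 2)}
  {W : Matrix (Fin rA') (Fin rB') (ZMod 2)} {t : Fin rA' → ZMod 2}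

theorem mul_add_mul_eq_vecMulVec_of_orthogonal_SZstab
    (h : ∀ z ∈ SZstab HXA HZA HAbar HBbar ιA ρ ℓ zA0, bform (ofParts a V W t) z = 0) :
    HAbar * V + W * HBbar = vecMulVec t (Pi.single ℓ 1) := by
  ext i j
  by_cases hj : j = ℓ
  · subst hj
    have := h _ (sZC_add_eT_mem_SZstab i)
    rw [bform_add_right, bform_ofParts_sZC, bform_ofParts_eT, CharTwo.add_eq_zero] at this
    simpa [vecMulVec_apply] using this
  · simpa [vecMulVec_apply, hj, bform_ofParts_sZC] using h _ (sZC_mem_SZstab i hj)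

theorem mulVec_add_sum_smul_single_eq_zero (hOrthA : HXA * HZA.transpose = 0)
    {xA : A → ZMod 2} (hιrange : ∀ a, xA a ≠ 0 ↔ ∃ k, ιA k = a)
    (hρrange : ∀ j, (∃ a, xA a ≠ 0 ∧ HZA j a ≠ 0) ↔ ∃ i, ρ i = j)
    (hHAbar : ∀ i k, HAbar i k = HZA (ρ i) (ιA k))
    (hvX : ∀ z ∈ SZstab HXA HZA HAbar HBbar ιA ρ ℓ zA0, bform (ofParts a V W t) z = 0)
    {s : Fin mA → ZMod 2} (ht : t = HAbar *ᵥ s) :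
    HZA *ᵥ (a + ∑ k, s k • Pi.single (ιA k) 1) = 0 := by
  have hrow (j : Fin rZA) : (HZA *ᵥ a) j = bform (ofParts a V W t) (onA (HZA j)) := by
    rw [bform_ofParts_onA, mulVec, dotProduct_comm]
  ext j
  simp only [mulVec_add, mulVec_sum, mulVec_smul, mulVec_single_one, Pi.add_apply,
    Finset.sum_apply, Pi.smul_apply, col_apply, smul_eq_mul, Pi.zero_apply]
  by_cases hj : ∃ i, ρ i = j
  · obtain ⟨i, rfl⟩ := hj
    have h := hvX _ (onA_add_eT_mem_SZstab hOrthA hHAbar i)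
    rw [bform_add_right, ← hrow, bform_ofParts_eT, CharTwo.add_eq_zero, ht] at h
    rw [h, CharTwo.add_eq_zero]
    simp [mulVec, dotProduct, hHAbar, mul_comm]
  · have hA (k : Fin mA) : HZA j (ιA k) = 0 := by
      by_contra hk
      exact hj ((hρrange j).mp ⟨ιA k, (hιrange _).mpr ⟨k, rfl⟩, hk⟩)
    rw [hrow, hvX _ (onA_mem_SZstab hOrthA hA)]
    simp [hA]

theorem wt_add_sum_smul_single_le :
    wt (a + ∑ k, (V *ᵥ 1) k • Pi.single (ιA k) 1) ≤ wt (ofParts a V W t) :=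
  calc wt (a + ∑ k, (V *ᵥ 1) k • Pi.single (ιA k) 1)
      ≤ wt a + wt (V *ᵥ 1) := (wt_add_le _ _).trans (by gcongr; exact wt_sum_smul_single_le ιA _)
    _ ≤ wt a + wt (fun p : Fin mA × Fin mB => V p.1 p.2) := by gcongr; exact wt_mulVec_one_le V
    _ ≤ wt (ofParts a V W t) := by rw [wt_ofParts]; omega

theorem ofParts_mem_GXgauge {s : Fin mA → ZMod 2} {N : Matrix (Fin mA) (Fin rB') (ZMod 2)}
    (hV : V = vecMulVec s (Pi.single ℓ 1) + N * HBbar) (hW : W = HAbar * N)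
    (ht : t = HAbar *ᵥ s) (ha : a + ∑ k, s k • Pi.single (ιA k) 1 ∈ rowSpan HXA) :
    ofParts a V W t ∈ GXgauge HXA HAbar HBbar ιA ℓ := by
  have hdecomp : ofParts a V W t = onA (a + ∑ k, s k • Pi.single (ιA k) 1)
      + ∑ k, s k • SXT HAbar ιA ℓ k
      + ∑ p : Fin mA × Fin rB', N p.1 p.2 • sXC HAbar HBbar p.1 p.2 := by
    rw [sum_smul_SXT, sum_smul_sXC, onA_eq_ofParts, ofParts_add, ofParts_add, hV, hW, ht,
      add_assoc a, ZModModule.add_self]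
    simp
  rw [hdecomp]
  exact add_mem (add_mem (onA_mem_of_mem_rowSpan onA_mem_GXgauge ha)
    (sum_mem fun k _ => Submodule.smul_mem _ _ (SXT_mem_GXgauge k)))
    (sum_mem fun p _ => Submodule.smul_mem _ _ (sXC_mem_GXgauge p.1 p.2))

/-- Cleaning an `X`-type operator commuting with `S_Z` off the ancilla with the `S^X_{T,k}` and the
`X`-checks of `C` leaves an `X`-logical of `A`, no heavier than the operator. -/
theorem exists_cleaned_of_orthogonal_SZstab (hOrthA : HXA * HZA.transpose = 0)
    {xA : A → ZMod 2} (hιrange : ∀ a, xA a ≠ 0 ↔ ∃ k, ιA k = a)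
    (hρrange : ∀ j, (∃ a, xA a ≠ 0 ∧ HZA j a ≠ 0) ↔ ∃ i, ρ i = j)
    (hHAbar : ∀ i k, HAbar i k = HZA (ρ i) (ιA k))
    (hkerB : LinearMap.ker HBbar.mulVecLin = ZMod 2 ∙ 1)
    (hkerBT : LinearMap.ker HBbarᵀ.mulVecLin = ⊥) (vX : MQ A mA mB rA' rB' → ZMod 2)
    (hvX : ∀ z ∈ SZstab HXA HZA HAbar HBbar ιA ρ ℓ zA0, bform vX z = 0) :
    ∃ a' : A → ZMod 2, HZA *ᵥ a' = 0 ∧ wt a' ≤ wt vX ∧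
      (a' ∈ rowSpan HXA → vX ∈ GXgauge HXA HAbar HBbar ιA ℓ) := by
  obtain ⟨a, V, W, t, rfl⟩ := ofParts_surjective vX
  obtain ⟨N, hV, hW, ht⟩ := exists_eq_vecMulVec_add_mul hkerBT hkerB ℓ
    (mul_add_mul_eq_vecMulVec_of_orthogonal_SZstab hvX)
  exact ⟨_, mulVec_add_sum_smul_single_eq_zero hOrthA hιrange hρrange hHAbar hvX ht,
    wt_add_sum_smul_single_le,
    ofParts_mem_GXgauge hV (by rw [hW, ZModModule.neg_eq_self]) ht⟩

theorem mulVec_eq_zero_of_orthogonal_SXstab (hOrthA : HXA * HZA.transpose = 0)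
    (hzA0ker : HXA.mulVec zA0 = 0)
    (hvZ : ∀ x ∈ SXstab HXA HZA HAbar HBbar ιA ρ ℓ zA0, bform (ofParts a V W t) x = 0) :
    HXA *ᵥ a = 0 := by
  ext r
  simpa [bform_ofParts_onA, mulVec, dotProduct_comm] using
    hvZ _ (onA_mem_SXstab hOrthA hzA0ker r)

theorem ofParts_mem_GZgauge_of_orthogonal_SXstab
    (hkerB : LinearMap.ker HBbar.mulVecLin = ZMod 2 ∙ 1)
    (hkerBT : LinearMap.ker HBbarᵀ.mulVecLin = ⊥)
    (hvZ : ∀ x ∈ SXstab HXA HZA HAbar HBbar ιA ρ ℓ zA0, bform (ofParts a V W t) x = 0)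
    (ha : a ∈ rowSpan HZA) {l₀ : Fin mB} (hl₀ : ∀ k, V k l₀ = 0) :
    ofParts a V W t ∈ GZgauge HZA HAbar HBbar ρ ℓ zA0 := by
  have hVW : V * HBbarᵀ = HAbarᵀ * W := by
    ext i j
    have := hvZ _ (sXC_mem_SXstab i j)
    rwa [bform_ofParts_sXC, CharTwo.add_eq_zero] at this
  obtain ⟨M, rfl, rfl⟩ := exists_eq_transpose_mul_and_eq_mul_transpose
    (mulVec_surjective_of_ker_transpose_eq_bot hkerBT) hkerB hVW hl₀
  have hdecomp : ofParts a (HAbarᵀ * M) (M * HBbarᵀ) t = onA a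
      + ∑ p : Fin rA' × Fin mB, M p.1 p.2 • sZC HAbar HBbar p.1 p.2 + ∑ i, t i • eT i := by
    rw [sum_smul_sZC, sum_smul_eT, onA_eq_ofParts, ofParts_add, ofParts_add]
    simp
  rw [hdecomp]
  exact add_mem (add_mem (onA_mem_of_mem_rowSpan onA_mem_GZgauge ha)
    (sum_mem fun p _ => Submodule.smul_mem _ _ (sZC_mem_GZgauge p.1 p.2)))
    (sum_mem fun i _ => Submodule.smul_mem _ _ (eT_mem_GZgauge i))

end Cleaning

theorem merged_subsystem_dressed_distance_general
    {A : Type} [Fintype A] [DecidableEq A] {rXA rZA mA rA' : ℕ}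
    (HXA : Matrix (Fin rXA) A (ZMod 2)) (HZA : Matrix (Fin rZA) A (ZMod 2))
    (hOrthA : HXA * HZA.transpose = 0)
    {B : Type} [Fintype B] {rXB rZB mB rB' : ℕ}
    (HXB : Matrix (Fin rXB) B (ZMod 2)) (HZB : Matrix (Fin rZB) B (ZMod 2))
    (dA dB : ℕ)
    (hdA : IsLeast {d : ℕ | ∃ v : A → ZMod 2,
      ((HZA.mulVec v = 0 ∧ v ∉ rowSpan HXA) ∨ (HXA.mulVec v = 0 ∧ v ∉ rowSpan HZA)) ∧
      wt v = d} dA)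
    (hdB : IsLeast {d : ℕ | ∃ v : B → ZMod 2,
      ((HZB.mulVec v = 0 ∧ v ∉ rowSpan HXB) ∨ (HXB.mulVec v = 0 ∧ v ∉ rowSpan HZB)) ∧
      wt v = d} dB)
    (xA : A → ZMod 2)
    (ιA : Fin mA → A)
    (hιrange : ∀ a, xA a ≠ 0 ↔ ∃ k, ιA k = a)
    (HAbar : Matrix (Fin rA') (Fin mA) (ZMod 2))
    (ρ : Fin rA' → Fin rZA)
    (hρrange : ∀ j, (∃ a, xA a ≠ 0 ∧ HZA j a ≠ 0) ↔ ∃ i, ρ i = j)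
    (hHAbar : ∀ i k, HAbar i k = HZA (ρ i) (ιA k))
    (zB : B → ZMod 2) (hzBker : HXB.mulVec zB = 0) (hzBnl : zB ∉ rowSpan HZB)
    (ιB : Fin mB → B)
    (hιBrange : ∀ b, zB b ≠ 0 ↔ ∃ k, ιB k = b)
    (HBbar : Matrix (Fin rB') (Fin mB) (ZMod 2))
    (hkerB : {v : Fin mB → ZMod 2 | HBbar.mulVec v = 0} = {0, fun _ => 1})
    (hkerBT : {v : Fin rB' → ZMod 2 | HBbar.transpose.mulVec v = 0} = {0})
    (ℓ : Fin mB)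
    (zA0 : A → ZMod 2) (hzA0ker : HXA.mulVec zA0 = 0)
    : ∀ vX vZ : MQ A mA mB rA' rB' → ZMod 2,
      (∀ z ∈ SZstab HXA HZA HAbar HBbar ιA ρ ℓ zA0, bform vX z = 0) →
      (∀ x ∈ SXstab HXA HZA HAbar HBbar ιA ρ ℓ zA0, bform vZ x = 0) →
      ¬(vX ∈ GXgauge HXA HAbar HBbar ιA ℓ ∧ vZ ∈ GZgauge HZA HAbar HBbar ρ ℓ zA0) →
      min dA dB ≤ (Finset.univ.filter fun q => vX q ≠ 0 ∨ vZ q ≠ 0).card := by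
  intro vX vZ hvX hvZ hng
  by_contra! hlt
  have hkerB' : LinearMap.ker HBbar.mulVecLin = ZMod 2 ∙ 1 :=
    Submodule.eq_span_singleton_of_coe_eq_pair hkerB
  have hkerBT' : LinearMap.ker HBbarᵀ.mulVecLin = ⊥ :=
    SetLike.coe_injective (hkerBT.trans Submodule.bot_coe.symm)
  set w := (Finset.univ.filter fun q => vX q ≠ 0 ∨ vZ q ≠ 0).card
  have hwtX : wt vX ≤ w := Finset.card_le_card (Finset.monotone_filter_right _ fun _ _ => Or.inl)
  have hwtZ : wt vZ ≤ w := Finset.card_le_card (Finset.monotone_filter_right _ fun _ _ => Or.inr)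
  refine hng ⟨?_, ?_⟩
  · obtain ⟨a', hker, hwt, hmem⟩ := exists_cleaned_of_orthogonal_SZstab hOrthA hιrange hρrange
      hHAbar hkerB' hkerBT' vX hvX
    refine hmem (by_contra fun h => ?_)
    have := hdA.2 ⟨a', .inl ⟨hker, h⟩, rfl⟩
    omega
  · obtain ⟨a, V, W, t, rfl⟩ := ofParts_surjective vZ
    rw [wt_ofParts] at hwtZ
    have hzB : wt zB ≤ mB := by
      simpa using wt_le_card_of_forall_ne_zero_mem_range ιB fun b hb => (hιBrange b).mp hb
    have := hdB.2 ⟨zB, .inr ⟨hzBker, hzBnl⟩, rfl⟩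
    obtain ⟨l₀, hl₀⟩ := exists_forall_eq_zero_of_wt_lt (V := V) <| by
      simp only [Fintype.card_fin]; omega
    refine ofParts_mem_GZgauge_of_orthogonal_SXstab hkerB' hkerBT' hvZ (by_contra fun h => ?_) hl₀
    have := hdA.2 ⟨a, .inr ⟨mulVec_eq_zero_of_orthogonal_SXstab hOrthA hzA0ker hvZ, h⟩, rfl⟩
    omega

/-- Subsystem code distance for lattice-surgery merging: the dressed distance is at least
`min d_A d_B`, i.e. every Pauli operator `(v_X, v_Z)` commuting with the stabilizer group
but lying outside the gauge group has weight at least `min d_A d_B`. -/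
theorem merged_subsystem_dressed_distance
    {A : Type} [Fintype A] [DecidableEq A] {rXA rZA mA rA' : ℕ}
    (HXA : Matrix (Fin rXA) A (ZMod 2)) (HZA : Matrix (Fin rZA) A (ZMod 2))
    (hOrthA : HXA * HZA.transpose = 0)
    {B : Type} [Fintype B] [DecidableEq B] {rXB rZB mB rB' : ℕ}
    (HXB : Matrix (Fin rXB) B (ZMod 2)) (HZB : Matrix (Fin rZB) B (ZMod 2))
    (hOrthB : HXB * HZB.transpose = 0)
    (dA dB : ℕ)
    (hdA : IsLeast {d : ℕ | ∃ v : A → ZMod 2,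
      ((HZA.mulVec v = 0 ∧ v ∉ rowSpan HXA) ∨ (HXA.mulVec v = 0 ∧ v ∉ rowSpan HZA)) ∧
      wt v = d} dA)
    (hdB : IsLeast {d : ℕ | ∃ v : B → ZMod 2,
      ((HZB.mulVec v = 0 ∧ v ∉ rowSpan HXB) ∨ (HXB.mulVec v = 0 ∧ v ∉ rowSpan HZB)) ∧
      wt v = d} dB)
    (xA : A → ZMod 2) (hxAker : HZA.mulVec xA = 0) (hxAnl : xA ∉ rowSpan HXA)
    (hxAmin : ∀ v : A → ZMod 2, HZA.mulVec v = 0 → v ∉ rowSpan HXA → wt xA ≤ wt v)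
    (ιA : Fin mA → A) (hιinj : Function.Injective ιA)
    (hιrange : ∀ a, xA a ≠ 0 ↔ ∃ k, ιA k = a)
    (HAbar : Matrix (Fin rA') (Fin mA) (ZMod 2))
    (ρ : Fin rA' → Fin rZA) (hρinj : Function.Injective ρ)
    (hρrange : ∀ j, (∃ a, xA a ≠ 0 ∧ HZA j a ≠ 0) ↔ ∃ i, ρ i = j)
    (hHAbar : ∀ i k, HAbar i k = HZA (ρ i) (ιA k))
    (zB : B → ZMod 2) (hzBker : HXB.mulVec zB = 0) (hzBnl : zB ∉ rowSpan HZB)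
    (hzBmin : ∀ v : B → ZMod 2, HXB.mulVec v = 0 → v ∉ rowSpan HZB → wt zB ≤ wt v)
    (ιB : Fin mB → B) (hιBinj : Function.Injective ιB)
    (hιBrange : ∀ b, zB b ≠ 0 ↔ ∃ k, ιB k = b)
    (HBbar : Matrix (Fin rB') (Fin mB) (ZMod 2))
    (ρB : Fin rB' → Fin rXB) (hρBinj : Function.Injective ρB)
    (hρBrange : ∀ j, (∃ b, zB b ≠ 0 ∧ HXB j b ≠ 0) ↔ ∃ i, ρB i = j)
    (hHBbar : ∀ i k, HBbar i k = HXB (ρB i) (ιB k))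
    (hkerA : {v : Fin mA → ZMod 2 | HAbar.mulVec v = 0} = {0, fun _ => 1})
    (hkerB : {v : Fin mB → ZMod 2 | HBbar.mulVec v = 0} = {0, fun _ => 1})
    (hkerBT : {v : Fin rB' → ZMod 2 | HBbar.transpose.mulVec v = 0} = {0})
    (ℓ : Fin mB)
    (zA0 : A → ZMod 2) (hzA0ker : HXA.mulVec zA0 = 0) (hzA0nl : zA0 ∉ rowSpan HZA)
    (hzA0pair : bform zA0 xA = 1)
    : ∀ vX vZ : MQ A mA mB rA' rB' → ZMod 2,
      (∀ z ∈ SZstab HXA HZA HAbar HBbar ιA ρ ℓ zA0, bform vX z = 0) →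
      (∀ x ∈ SXstab HXA HZA HAbar HBbar ιA ρ ℓ zA0, bform vZ x = 0) →
      ¬(vX ∈ GXgauge HXA HAbar HBbar ιA ℓ ∧ vZ ∈ GZgauge HZA HAbar HBbar ρ ℓ zA0) →
      min dA dB ≤ (Finset.univ.filter fun q => vX q ≠ 0 ∨ vZ q ≠ 0).card :=
  merged_subsystem_dressed_distance_general HXA HZA hOrthA HXB HZB dA dB hdA hdB xA ιA hιrange HAbar
    ρ hρrange hHAbar zB hzBker hzBnl ιB hιBrange HBbar hkerB hkerBT ℓ zA0 hzA0ker
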